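/- Every BST⊗-conjunction fulfilled by an accessible ⊗-graph that admits a topological ⊗-order (an accessible ordered ⊗-graph) is satisfiable by a hereditarily finite model. -/

import Mathlib

namespace BSTO

/-- The unordered Cartesian product `s ⊗ t = {{u,v} | u ∈ s, v ∈ t}`, as a class of ZFC sets. -/
def uprod (s t : ZFSet) : Set ZFSet := {w | ∃ u ∈ s, ∃ v ∈ t, w = ({u, v} : ZFSet)}

/-- A partition: a collection of pairwise disjoint nonempty sets. -/
def IsPartition (S : ZFSet) : Prop :=
  (∀ b, b ∈ S → b ≠ (∅ : ZFSet)) ∧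
    ∀ b, b ∈ S → ∀ c, c ∈ S → b ≠ c → ∀ t, t ∈ b → t ∉ c

/-- `Pow*₁,₂ B`: members of the intersecting power set of `B` of cardinality 1 or 2. -/
def powAst12 (B : ZFSet) : Set ZFSet :=
  {t | t ⊆ ZFSet.sUnion B ∧ (∀ s, s ∈ B → ∃ u, u ∈ t ∧ u ∈ s) ∧ ∃ u v : ZFSet, t = {u, v}}

/-- BST⊗-formulae. -/
inductive Fmla (V : Type) : Type
  | eqUnion (x y z : V)
  | eqInter (x y z : V)
  | eqDiff  (x y z : V)
  | eqUprod (x y z : V)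
  | subset  (x y : V)
  | not (φ : Fmla V)
  | and (φ ψ : Fmla V)
  | or (φ ψ : Fmla V)

def Fmla.Sat {V : Type} (M : V → ZFSet) : Fmla V → Prop
  | .eqUnion x y z => M x = M y ∪ M z
  | .eqInter x y z => M x = M y ∩ M z
  | .eqDiff x y z  => M x = M y \ M z
  | .eqUprod x y z => (M x).toSet = uprod (M y) (M z)
  | .subset x y    => M x ⊆ M y
  | .not φ         => ¬ Fmla.Sat M φ
  | .and φ ψ       => Fmla.Sat M φ ∧ Fmla.Sat M ψ
  | .or φ ψ        => Fmla.Sat M φ ∨ Fmla.Sat M ψ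

/-- A partition `S` satisfies `φ` if the set assignment induced by some
partition assignment `J` (mapping variables to sets of blocks) models `φ`. -/
def SatByPartition {V : Type} (S : ZFSet) (φ : Fmla V) : Prop :=
  ∃ J : V → ZFSet, (∀ v, J v ⊆ S) ∧ Fmla.Sat (fun v => ZFSet.sUnion (J v)) φ

/-- BST literals. -/
inductive BSTLit (V : Type) : Type
  | eqUnion (x y z : V)
  | eqDiff  (x y z : V)
  | ne (x y : V)

def BSTLit.Sat {V : Type} (M : V → ZFSet) : BSTLit V → Prop
  | .eqUnion x y z => M x = M y ∪ M z
  | .eqDiff x y z  => M x = M y \ M z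
  | .ne x y        => M x ≠ M y

/-- A map `F : V → pow(pow⁺ V)` fulfills a BST literal. -/
def BSTLit.FulfilledBy {V : Type} (F : V → Set (Set V)) : BSTLit V → Prop
  | .eqUnion x y z => F x = F y ∪ F z
  | .eqDiff x y z  => F x = F y \ F z
  | .ne x y        => F x ≠ F y

/-- BST⊗ literals. -/
inductive Lit (V : Type) : Type
  | eqUnion (x y z : V)
  | eqDiff  (x y z : V)
  | eqUprod (x y z : V)
  | ne (x y : V)

def Lit.Sat {V : Type} (M : V → ZFSet) : Lit V → Prop
  | .eqUnion x y z => M x = M y ∪ M z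
  | .eqDiff x y z  => M x = M y \ M z
  | .eqUprod x y z => (M x).toSet = uprod (M y) (M z)
  | .ne x y        => M x ≠ M y

/-- The nodes over a set of places: nonempty subsets of cardinality at most 2. -/
def NodesOf (P : Type) : Set (Set P) := {A | ∃ p q : P, A = {p, q}}

/-- Unordered product of two sets of places: the set of nodes `{u,v}`, `u ∈ s`, `v ∈ t`. -/
def setUprod {P : Type} (s t : Set P) : Set (Set P) := {A | ∃ u ∈ s, ∃ v ∈ t, A = {u, v}}

/-- Accessibility of a place from the source places, w.r.t. a target map `T`. -/
inductive Accessible {P : Type} (T : Set P → Set P) : P → Prop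
  | source (p : P) (h : ∀ A ∈ NodesOf P, p ∉ T A) : Accessible T p
  | step (p : P) (A : Set P) (hA : A ∈ NodesOf P)
      (hacc : ∀ q ∈ A, Accessible T q) (hp : p ∈ T A) : Accessible T p

/-- Conditions (a), (b), (c1)-(c3) for a literal, w.r.t. a ⊗-graph with target map `T`
and a candidate fulfilling map `F`. -/
def Lit.GraphFulfilled {P V : Type} (T : Set P → Set P) (F : V → Set P) : Lit V → Prop
  | .eqUnion x y z => F x = F y ∪ F z
  | .eqDiff x y z  => F x = F y \ F z
  | .ne x y        => F x ≠ F y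
  | .eqUprod x y z =>
      (∀ υ ∈ F y, ∀ ζ ∈ F z, (T {υ, ζ}).Nonempty ∧ T {υ, ζ} ⊆ F x) ∧
      F x ⊆ (⋃ A ∈ setUprod (F y) (F z), T A) ∧
      (⋃ A ∈ NodesOf P \ setUprod (F y) (F z), T A) ∩ F x = ∅

/-- A ⊗-graph (given by its target map `T`) fulfills the conjunction `Φ` via `F`. -/
def Fulfills {P V : Type} (T : Set P → Set P) (F : V → Set P) (Φ : List (Lit V)) : Prop :=
  ∀ l ∈ Φ, Lit.GraphFulfilled T F l

/-- `S'` is a ⊗-subpartition of the partition `S`. -/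
def OSubpart (S : ZFSet) (S' : Set ZFSet) : Prop :=
  S' ⊆ S.toSet ∧ ∃ B : Set ZFSet,
    (∀ b ∈ B, ∃ p, p ∈ S ∧ ∃ q, q ∈ S ∧ b = ({p, q} : ZFSet)) ∧
    (⋃ c ∈ S', c.toSet) = ⋃ b ∈ B, powAst12 b

/-- `Σ_⊗`: the maximal ⊗-subpartition of `S` (the union of all ⊗-subpartitions). -/
def sigmaOtimes (S : ZFSet) : Set ZFSet := {b | ∃ S', OSubpart S S' ∧ b ∈ S'}

/-- The target map of the ⊗-graph induced by a partition `S` via the bijection `e`,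
relative to the set `Pi` of ⊗-upblocks. -/
def inducedT (S : ZFSet) {P : Type} (e : P ≃ S.toSet) (Pi : Set ZFSet) (A : Set P) :
    Set P :=
  {q | ∃ p₁ p₂ : P, A = {p₁, p₂} ∧ ({(e p₁ : ZFSet), (e p₂ : ZFSet)} : ZFSet) ∈ Pi ∧
    (e q : ZFSet) ∈ sigmaOtimes S ∧
    ((e q : ZFSet).toSet ∩ powAst12 ({(e p₁ : ZFSet), (e p₂ : ZFSet)} : ZFSet)).Nonempty}

/-- `m` is the maximum of `Sp` w.r.t. the strict order `r`. -/
def IsMaxIn {P : Type} (r : P → P → Prop) (Sp : Set P) (m : P) : Prop :=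
  m ∈ Sp ∧ ∀ p ∈ Sp, p = m ∨ r p m

/-- `r` is a topological ⊗-order for the ⊗-graph with target map `T`:
a strict total order on places with `max A ≺ max T(A)` for every ⊗-node `A`. -/
def IsTopOOrder {P : Type} (T : Set P → Set P) (r : P → P → Prop) : Prop :=
  (∀ a, ¬ r a a) ∧ (∀ a b c, r a b → r b c → r a c) ∧ (∀ a b, a ≠ b → r a b ∨ r b a) ∧
  ∀ A ∈ NodesOf P, (T A).Nonempty →
    ∃ m m', IsMaxIn r A m ∧ IsMaxIn r (T A) m' ∧ r m m'

/-- Hereditarily finite ZFC sets. -/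
inductive IsHF : ZFSet → Prop
  | mk (x : ZFSet) (hfin : x.toSet.Finite) (hmem : ∀ y ∈ x, IsHF y) : IsHF x

attribute [local instance] Classical.propDecidable
set_option linter.unusedSectionVars false

universe u

theorem ZFSet.mem_toSet (a b : ZFSet.{u}) : a ∈ b.toSet ↔ a ∈ b := Iff.rfl

lemma IsHF.mem' {x y : ZFSet} (h : IsHF x) (hy : y ∈ x) : IsHF y := by
  cases h with | mk x hfin hmem => exact hmem y hy

/-- Turn a finite set of ZF sets into a ZF set. -/
noncomputable def toZF (s : Finset ZFSet.{u}) : ZFSet.{u} := s.toList.foldr insert ∅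

lemma mem_foldr {x : ZFSet} {l : List ZFSet} :
    x ∈ l.foldr insert (∅ : ZFSet) ↔ x ∈ l := by
  induction l with
  | nil => simp [ZFSet.notMem_empty]
  | cons a l ih => simp [ZFSet.mem_insert_iff, ih]

lemma mem_toZF {x : ZFSet} {s : Finset ZFSet} : x ∈ toZF s ↔ x ∈ s := by
  simp [toZF, mem_foldr]

lemma toZF_toSet (s : Finset ZFSet) : (toZF s).toSet = ↑s := by
  ext x; simp [ZFSet.mem_toSet, mem_toZF]

lemma zmem_pair {w u v : ZFSet} : w ∈ ({u, v} : ZFSet) ↔ w = u ∨ w = v := by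
  simp [ZFSet.mem_insert_iff, ZFSet.mem_singleton]

lemma zpair_comm (u v : ZFSet) : ({u, v} : ZFSet) = {v, u} := by
  apply ZFSet.ext; intro w; simp [zmem_pair, or_comm]

lemma zpair_eq {u v u' v' : ZFSet} (h : ({u, v} : ZFSet) = {u', v'}) :
    (u = u' ∧ v = v') ∨ (u = v' ∧ v = u') := by
  have hu : u = u' ∨ u = v' := by
    have : u ∈ ({u', v'} : ZFSet) := h ▸ (zmem_pair.2 (Or.inl rfl))
    exact zmem_pair.1 this
  have hv : v = u' ∨ v = v' := by
    have : v ∈ ({u', v'} : ZFSet) := h ▸ (zmem_pair.2 (Or.inr rfl))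
    exact zmem_pair.1 this
  have hu' : u' = u ∨ u' = v := by
    have : u' ∈ ({u, v} : ZFSet) := h ▸ (zmem_pair.2 (Or.inl rfl))
    exact zmem_pair.1 this
  have hv' : v' = u ∨ v' = v := by
    have : v' ∈ ({u, v} : ZFSet) := h ▸ (zmem_pair.2 (Or.inr rfl))
    exact zmem_pair.1 this
  rcases hu with hu | hu
  · rcases hv with hv | hv
    · rcases hv' with hv'2 | hv'2
      · exact Or.inr ⟨hv'2.symm, hv⟩
      · exact Or.inl ⟨hu, hv'2.symm⟩
    · exact Or.inl ⟨hu, hv⟩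
  · rcases hv with hv | hv
    · exact Or.inr ⟨hu, hv⟩
    · rcases hu' with hu'2 | hu'2
      · exact Or.inl ⟨hu'2.symm, hv⟩
      · exact Or.inr ⟨hu, hu'2.symm⟩

/-- von Neumann naturals as ZF sets. -/
noncomputable def vonN : ℕ → ZFSet.{u}
  | 0 => ∅
  | n + 1 => insert (vonN n) (vonN n)

lemma vonN_mem {n m : ℕ} (h : n < m) : vonN n ∈ vonN m := by
  induction m with
  | zero => omega
  | succ m ih =>
    rcases Nat.lt_succ_iff_lt_or_eq.1 h with h' | h'
    · exact ZFSet.mem_insert_iff.2 (Or.inr (ih h'))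
    · subst h'; exact ZFSet.mem_insert_iff.2 (Or.inl rfl)

lemma vonN_inj : Function.Injective vonN := by
  intro n m h
  by_contra hne
  rcases Nat.lt_or_ge n m with h' | h'
  · have hm := vonN_mem h'
    rw [h] at hm
    exact ZFSet.mem_irrefl _ hm
  · have h'' : m < n := by omega
    have hm := vonN_mem h''
    rw [h] at hm
    exact ZFSet.mem_irrefl _ hm

lemma isHF_vonN (n : ℕ) : IsHF (vonN n) := by
  induction n with
  | zero =>
    refine IsHF.mk _ (Set.finite_empty.subset ?_) ?_
    · intro x hx
      exact absurd ((ZFSet.mem_toSet x (vonN 0)).1 hx) (ZFSet.notMem_empty x)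
    · intro y hy; exact absurd hy (ZFSet.notMem_empty y)
  | succ n ih =>
    refine IsHF.mk _ ?_ ?_
    · have : (vonN (n+1)).toSet = insert (vonN n) ((vonN n).toSet) := by
        ext x; simp [ZFSet.mem_toSet, vonN, ZFSet.mem_insert_iff]
      rw [this]
      have : (vonN n).toSet.Finite := by
        cases ih with | mk x hfin hmem => exact hfin
      exact this.insert _
    · intro y hy
      rcases ZFSet.mem_insert_iff.1 (show y ∈ insert (vonN n) (vonN n) from hy) with rfl | hy'
      · exact ih
      · exact ih.mem' hy'

/-- Atoms: three-element sets coding a natural number. -/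
noncomputable def atomZ (j : ℕ) : ZFSet.{u} := {vonN 0, vonN 1, vonN (j + 3)}

lemma vonN_three_ne (j : ℕ) : vonN.{u} (j+3) ≠ vonN.{u} 0 ∧ vonN.{u} (j+3) ≠ vonN.{u} 1 :=
  ⟨fun h => by have := vonN_inj h; omega, fun h => by have := vonN_inj h; omega⟩

lemma mem_atomZ {x : ZFSet} {j : ℕ} :
    x ∈ atomZ j ↔ x = vonN 0 ∨ x = vonN 1 ∨ x = vonN (j+3) := by
  simp [atomZ, ZFSet.mem_insert_iff, ZFSet.mem_singleton]

lemma atomZ_inj : Function.Injective atomZ := by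
  intro j j' h
  have h3 : vonN (j+3) ∈ atomZ j' := h ▸ (mem_atomZ.2 (Or.inr (Or.inr rfl)))
  rcases mem_atomZ.1 h3 with h' | h' | h'
  · exact absurd h' (vonN_three_ne j).1
  · exact absurd h' (vonN_three_ne j).2
  · have := vonN_inj h'; omega

lemma atomZ_ne_pair (j : ℕ) (u v : ZFSet) : atomZ j ≠ ({u, v} : ZFSet) := by
  intro h
  have h0 : (vonN 0 : ZFSet) = u ∨ (vonN 0 : ZFSet) = v :=
    zmem_pair.1 (h ▸ (mem_atomZ.2 (Or.inl rfl)))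
  have h1 : (vonN 1 : ZFSet) = u ∨ (vonN 1 : ZFSet) = v :=
    zmem_pair.1 (h ▸ (mem_atomZ.2 (Or.inr (Or.inl rfl))))
  have h2 : (vonN (j+3) : ZFSet) = u ∨ (vonN (j+3) : ZFSet) = v :=
    zmem_pair.1 (h ▸ (mem_atomZ.2 (Or.inr (Or.inr rfl))))
  have d01 : (vonN 0 : ZFSet) ≠ vonN 1 := fun h => by have := vonN_inj h; omega
  rcases h2 with h2 | h2
  · have e0 : (vonN 0 : ZFSet) = v := by
      rcases h0 with h0 | h0
      · exact absurd (h2.trans h0.symm) (vonN_three_ne j).1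
      · exact h0
    have e1 : (vonN 1 : ZFSet) = v := by
      rcases h1 with h1 | h1
      · exact absurd (h2.trans h1.symm) (vonN_three_ne j).2
      · exact h1
    exact d01 (e0.trans e1.symm)
  · have e0 : (vonN 0 : ZFSet) = u := by
      rcases h0 with h0 | h0
      · exact h0
      · exact absurd (h2.trans h0.symm) (vonN_three_ne j).1
    have e1 : (vonN 1 : ZFSet) = u := by
      rcases h1 with h1 | h1
      · exact h1
      · exact absurd (h2.trans h1.symm) (vonN_three_ne j).2
    exact d01 (e0.trans e1.symm)

lemma isHF_atomZ (j : ℕ) : IsHF (atomZ j) := by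
  refine IsHF.mk _ ?_ ?_
  · have : (atomZ j).toSet = {vonN 0, vonN 1, vonN (j+3)} := by
      ext x; simp [ZFSet.mem_toSet, mem_atomZ]
    rw [this]; exact (Set.finite_singleton _).insert _ |>.insert _
  · intro y hy
    rcases mem_atomZ.1 hy with rfl | rfl | rfl <;> exact isHF_vonN _

lemma isHF_pair {u v : ZFSet} (hu : IsHF u) (hv : IsHF v) : IsHF ({u, v} : ZFSet) := by
  refine IsHF.mk _ ?_ ?_
  · have : ({u,v} : ZFSet).toSet = {u, v} := by
      ext x; simp [ZFSet.mem_toSet, zmem_pair]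
    rw [this]; exact (Set.finite_singleton _).insert _
  · intro y hy; rcases zmem_pair.1 hy with rfl | rfl <;> assumption

/-- Finite unordered products. -/
noncomputable def pairsF (s t : Finset ZFSet.{u}) : Finset ZFSet.{u} :=
  (s ×ˢ t).image fun uv => ({uv.1, uv.2} : ZFSet)

lemma mem_pairsF {w : ZFSet} {s t : Finset ZFSet} :
    w ∈ pairsF s t ↔ ∃ u ∈ s, ∃ v ∈ t, w = ({u, v} : ZFSet) := by
  simp only [pairsF, Finset.mem_image, Finset.mem_product, Prod.exists]
  constructor
  · rintro ⟨u, v, ⟨hu, hv⟩, rfl⟩; exact ⟨u, hu, v, hv, rfl⟩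
  · rintro ⟨u, hu, v, hv, rfl⟩; exact ⟨u, v, ⟨hu, hv⟩, rfl⟩

/-- Choice of an `n`-element part. -/
noncomputable def Rpart (n : ℕ) (s : Finset ZFSet.{u}) : Finset ZFSet.{u} :=
  (Finset.exists_subset_card_eq (s := s) (n := min n s.card) (min_le_right _ _)).choose

lemma Rpart_subset (n : ℕ) (s : Finset ZFSet) : Rpart n s ⊆ s :=
  (Finset.exists_subset_card_eq (s := s) (n := min n s.card) (min_le_right _ _)).choose_spec.1

lemma Rpart_card (n : ℕ) (s : Finset ZFSet) : (Rpart n s).card = min n s.card :=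
  (Finset.exists_subset_card_eq (s := s) (n := min n s.card) (min_le_right _ _)).choose_spec.2

/-- An injection from a finset into a (large enough) finset of ZF sets. -/
lemma exists_injOn {α : Type} (t : Finset α) (s : Finset ZFSet) (h : t.card ≤ s.card) :
    ∃ f : α → ZFSet, (∀ a ∈ t, f a ∈ s) ∧ ∀ a ∈ t, ∀ b ∈ t, f a = f b → a = b := by
  classical
  obtain ⟨s', hs', hcard⟩ := Finset.exists_subset_card_eq (s := s) h
  have e := Finset.equivOfCardEq (hcard.symm)
  refine ⟨fun a => if h : a ∈ t then (e ⟨a, h⟩ : ZFSet) else ∅, ?_, ?_⟩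
  · intro a ha; simp only [dif_pos ha]; exact hs' (e ⟨a, ha⟩).2
  · intro a ha b hb hab
    simp only [dif_pos ha, dif_pos hb] at hab
    have := e.injective (Subtype.ext hab)
    exact congrArg Subtype.val this

noncomputable def mkInjD {α : Type} (t : Finset α) (s : Finset ZFSet.{u}) : α → ZFSet.{u} :=
  if h : t.card ≤ s.card then (exists_injOn t s h).choose else fun _ => ∅

lemma mkInjD_mem {α : Type} {t : Finset α} {s : Finset ZFSet} (h : t.card ≤ s.card)
    {a : α} (ha : a ∈ t) : mkInjD t s a ∈ s := by
  rw [mkInjD, dif_pos h]; exact (exists_injOn t s h).choose_spec.1 a ha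

lemma mkInjD_inj {α : Type} {t : Finset α} {s : Finset ZFSet} (h : t.card ≤ s.card)
    {a b : α} (ha : a ∈ t) (hb : b ∈ t) (hab : mkInjD t s a = mkInjD t s b) : a = b := by
  rw [mkInjD, dif_pos h] at hab
  exact (exists_injOn t s h).choose_spec.2 a ha b hb hab


section Graph

variable {P : Type} [Fintype P] [LinearOrder P] (T : Set P → Set P)

lemma pair_mem_nodes (p q : P) : ({p, q} : Set P) ∈ NodesOf P := ⟨p, q, rfl⟩

def Src (p : P) : Prop := ∀ A ∈ NodesOf P, p ∉ T A

lemma not_src_of_mem {p p1 p2 : P} (h : p ∈ T {p1, p2}) : ¬ Src T p :=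
  fun hs => hs {p1, p2} (pair_mem_nodes p1 p2) h

def AccN : ℕ → P → Prop
  | 0, q => Src T q
  | (k+1), q => Src T q ∨ ∃ p1 p2 : P, q ∈ T {p1, p2} ∧ AccN k p1 ∧ AccN k p2

lemma accN_succ : ∀ {k : ℕ} {q : P}, AccN T k q → AccN T (k+1) q := by
  intro k
  induction k with
  | zero => intro q h; exact Or.inl h
  | succ k ih =>
    intro q h
    rcases h with h | ⟨p1, p2, hm, h1, h2⟩
    · exact Or.inl h
    · exact Or.inr ⟨p1, p2, hm, ih h1, ih h2⟩

lemma accN_mono {k k' : ℕ} (hk : k ≤ k') {q : P} (h : AccN T k q) : AccN T k' q := by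
  induction k' with
  | zero => rwa [Nat.le_zero.1 hk] at h
  | succ k' ih =>
    rcases Nat.le_succ_iff.1 hk with h' | h'
    · exact accN_succ T (ih h')
    · rwa [h'] at h

lemma acc_accN {p : P} (h : Accessible T p) : ∃ k, AccN T k p := by
  induction h with
  | source p h => exact ⟨0, h⟩
  | step p A hA hacc hp ih =>
    obtain ⟨p1, p2, rfl⟩ := hA
    obtain ⟨k1, h1⟩ := ih p1 (by exact Set.mem_insert _ _)
    obtain ⟨k2, h2⟩ := ih p2 (by exact Set.mem_insert_iff.2 (Or.inr rfl))
    exact ⟨max k1 k2 + 1, Or.inr ⟨p1, p2, hp,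
      accN_mono T (le_max_left _ _) h1, accN_mono T (le_max_right _ _) h2⟩⟩

noncomputable def rho (q : P) : ℕ := sInf {k | AccN T k q}

lemma rho_le {k : ℕ} {q : P} (h : AccN T k q) : rho T q ≤ k := Nat.sInf_le h

lemma rho_spec {q : P} (h : ∃ k, AccN T k q) : AccN T (rho T q) q := Nat.sInf_mem h

/-- Existence of a strictly-lower-rank parent node. -/
def exPP (q : P) : Prop :=
  ∃ pp : P × P, pp.1 ≤ pp.2 ∧ q ∈ T {pp.1, pp.2} ∧
    rho T pp.1 < rho T q ∧ rho T pp.2 < rho T q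

lemma not_src_of_exPP {q : P} (h : exPP T q) : ¬ Src T q :=
  not_src_of_mem T h.choose_spec.2.1

lemma exPP_of {q : P} (hex : ∃ k, AccN T k q) (hns : ¬ Src T q) : exPP T q := by
  have hA := rho_spec T hex
  rcases hk : rho T q with _ | k
  · rw [hk] at hA; exact absurd hA hns
  · rw [hk] at hA
    rcases hA with hs | ⟨p1, p2, hm, h1, h2⟩
    · exact absurd hs hns
    · have l1 : rho T p1 ≤ k := rho_le T h1
      have l2 : rho T p2 ≤ k := rho_le T h2
      rcases le_total p1 p2 with hle | hle
      · refine ⟨(p1, p2), hle, hm, ?_, ?_⟩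
        · show rho T p1 < rho T q; omega
        · show rho T p2 < rho T q; omega
      · refine ⟨(p2, p1), hle, ?_, ?_, ?_⟩
        · rwa [Set.pair_comm p2 p1]
        · show rho T p2 < rho T q; omega
        · show rho T p1 < rho T q; omega

noncomputable def par (q : P) : P × P :=
  if h : exPP T q then h.choose else (q, q)

lemma par_spec {q : P} (h : exPP T q) :
    (par T q).1 ≤ (par T q).2 ∧ q ∈ T {(par T q).1, (par T q).2} ∧
      rho T (par T q).1 < rho T q ∧ rho T (par T q).2 < rho T q := by
  rw [par, dif_pos h]; exact h.choose_spec

noncomputable def idx (p : P) : ℕ := (Fintype.equivFin P p : Fin _).val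

lemma idx_inj {p p' : P} (h : idx p = idx p') : p = p' :=
  (Fintype.equivFin P).injective (Fin.val_injective h)

noncomputable def Rmax : ℕ := (Finset.univ : Finset P).sup (rho T)

lemma rho_le_Rmax (q : P) : rho T q ≤ Rmax T := Finset.le_sup (Finset.mem_univ q)

noncomputable def K0 : ℕ := Fintype.card P * Rmax T + Fintype.card P + 1

noncomputable def atomsF (p : P) : Finset ZFSet.{u} :=
  (Finset.range (K0 T)).image fun i => atomZ (Nat.pair (idx p) i)

lemma mem_atomsF {w : ZFSet} {p : P} :
    w ∈ atomsF T p ↔ ∃ i < K0 T, w = atomZ (Nat.pair (idx p) i) := by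
  simp only [atomsF, Finset.mem_image, Finset.mem_range]
  constructor
  · rintro ⟨i, hi, rfl⟩; exact ⟨i, hi, rfl⟩
  · rintro ⟨i, hi, rfl⟩; exact ⟨i, hi, rfl⟩

noncomputable def tFns (p1 p2 : P) : Finset P := (T {p1, p2}).toFinite.toFinset

lemma mem_tFns {q p1 p2 : P} : q ∈ tFns T p1 p2 ↔ q ∈ T {p1, p2} :=
  Set.Finite.mem_toFinset _

noncomputable def maxT (p1 p2 : P) : P :=
  if h : (tFns T p1 p2).Nonempty then (tFns T p1 p2).max' h else p1

lemma maxT_mem {p1 p2 : P} (h : (tFns T p1 p2).Nonempty) : maxT T p1 p2 ∈ T {p1, p2} := by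
  rw [maxT, dif_pos h]; exact (mem_tFns T).1 ((tFns T p1 p2).max'_mem h)

lemma le_maxT {q p1 p2 : P} (h : q ∈ T {p1, p2}) : q ≤ maxT T p1 p2 := by
  have hne : (tFns T p1 p2).Nonempty := ⟨q, (mem_tFns T).2 h⟩
  rw [maxT, dif_pos hne]; exact Finset.le_max' _ _ ((mem_tFns T).2 h)

/-- Generic allocation: pairs of left-part elements of `s1` with a chosen element
of the reserved part of `s2`. -/
noncomputable def allocG (nn : ℕ) (s1 s2 : Finset ZFSet) (tF : Finset P) (q : P) :
    Finset ZFSet.{u} :=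
  (s1 \ Rpart nn s1).image fun u => ({u, mkInjD tF (Rpart nn s2) q} : ZFSet)

noncomputable def Eb : P → Finset ZFSet.{u} :=
  (InvImage.wf (rho T) Nat.lt_wfRel.wf).fix fun q rec =>
    if h : exPP T q then
      allocG (Fintype.card P)
        (rec (par T q).1 (by show rho T _ < rho T q; exact (par_spec T h).2.2.1))
        (rec (par T q).2 (by show rho T _ < rho T q; exact (par_spec T h).2.2.2))
        (tFns T (par T q).1 (par T q).2) q
    else atomsF T q

noncomputable def allocF (p1 p2 q : P) : Finset ZFSet.{u} :=
  allocG (Fintype.card P) (Eb T p1) (Eb T p2) (tFns T p1 p2) q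

lemma Eb_eq (q : P) :
    Eb T q = if h : exPP T q then allocF T (par T q).1 (par T q).2 q else atomsF T q := by
  show (InvImage.wf (rho T) Nat.lt_wfRel.wf).fix _ q = _
  rw [WellFounded.fix_eq]
  rfl

lemma Eb_eq_src {q : P} (h : ¬ exPP T q) : Eb T q = atomsF T q := by
  rw [Eb_eq, dif_neg h]

lemma Eb_eq_alloc {q : P} (h : exPP T q) :
    Eb T q = allocF T (par T q).1 (par T q).2 q := by
  rw [Eb_eq, dif_pos h]

/-- The chosen injection for a node. -/
noncomputable def hN (p1 p2 : P) : P → ZFSet.{u} :=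
  mkInjD (tFns T p1 p2) (Rpart (Fintype.card P) (Eb T p2))

lemma mem_allocF {w : ZFSet} {p1 p2 q : P} :
    w ∈ allocF T p1 p2 q ↔
      ∃ u ∈ Eb T p1 \ Rpart (Fintype.card P) (Eb T p1), w = ({u, hN T p1 p2 q} : ZFSet) := by
  simp only [allocF, allocG, hN, Finset.mem_image]
  constructor
  · rintro ⟨u, hu, rfl⟩; exact ⟨u, hu, rfl⟩
  · rintro ⟨u, hu, rfl⟩; exact ⟨u, hu, rfl⟩

lemma card_atomsF (p : P) : (atomsF.{u} T p).card = K0 T := by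
  rw [atomsF, Finset.card_image_of_injective, Finset.card_range]
  intro i j hij
  exact (Nat.pair_eq_pair.1 (atomZ_inj hij)).2

lemma card_allocF (p1 p2 q : P) :
    (allocF.{u} T p1 p2 q).card
      = (Eb.{u} T p1).card - min (Fintype.card P) (Eb.{u} T p1).card := by
  have hinj : Set.InjOn (fun u => ({u, hN.{u} T p1 p2 q} : ZFSet))
      ↑(Eb.{u} T p1 \ Rpart (Fintype.card P) (Eb.{u} T p1)) := by
    intro u hu u' hu' huv
    rcases zpair_eq huv with ⟨h1, _⟩ | ⟨h1, h2⟩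
    · exact h1
    · exact h1.trans h2
  rw [hN] at hinj
  show (Finset.image _ _).card = _
  rw [Finset.card_image_of_injOn hinj, Finset.card_sdiff_of_subset (Rpart_subset _ _), Rpart_card]


lemma K0_le_card_Eb (q : P) :
    K0 T ≤ (Eb.{u} T q).card + Fintype.card P * rho T q := by
  have H : ∀ k (q : P), rho T q ≤ k →
      K0 T ≤ (Eb.{u} T q).card + Fintype.card P * rho T q := by
    intro k
    induction k with
    | zero =>
      intro q hq
      have hnp : ¬ exPP T q := by
        rintro ⟨pp, _, _, h1, _⟩; omega
      rw [Eb_eq_src T hnp, card_atomsF]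
      omega
    | succ k ih =>
      intro q hq
      by_cases h : exPP T q
      · have hs := par_spec T h
        have h1 : rho T (par T q).1 ≤ k := by omega
        have hih := ih (par T q).1 h1
        have hcard := card_allocF T (par T q).1 (par T q).2 q
        rw [Eb_eq_alloc T h, hcard]
        have hmin : min (Fintype.card P) (Eb T (par T q).1).card ≤ Fintype.card P :=
          min_le_left _ _
        have hmul : Fintype.card P * rho T (par T q).1 + Fintype.card P
            ≤ Fintype.card P * rho T q := by
          have h2 : rho T (par T q).1 + 1 ≤ rho T q := hs.2.2.1
          calc Fintype.card P * rho T (par T q).1 + Fintype.card P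
              = Fintype.card P * (rho T (par T q).1 + 1) := by ring
            _ ≤ Fintype.card P * rho T q := Nat.mul_le_mul_left _ h2
        omega
      · rw [Eb_eq_src T h, card_atomsF]
        omega
  exact H (rho T q) q le_rfl

lemma card_Eb (q : P) : Fintype.card P + 1 ≤ (Eb.{u} T q).card := by
  have h1 := K0_le_card_Eb.{u} T q
  have h2 : Fintype.card P * rho T q ≤ Fintype.card P * Rmax T :=
    Nat.mul_le_mul_left _ (rho_le_Rmax T q)
  have h3 : K0 T = Fintype.card P * Rmax T + Fintype.card P + 1 := rfl
  omega

lemma Rpart_Eb_card (q : P) :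
    (Rpart (Fintype.card P) (Eb.{u} T q)).card = Fintype.card P := by
  rw [Rpart_card]
  have := card_Eb T q
  omega

lemma tFns_card_le (p1 p2 q : P) :
    (tFns T p1 p2).card ≤ (Rpart (Fintype.card P) (Eb.{u} T q)).card := by
  rw [Rpart_Eb_card]
  exact Finset.card_le_univ _

lemma hN_mem {p1 p2 q : P} (h : q ∈ T {p1, p2}) :
    hN T p1 p2 q ∈ Rpart (Fintype.card P) (Eb T p2) :=
  mkInjD_mem (tFns_card_le T p1 p2 p2) ((mem_tFns T).2 h)

lemma hN_inj {p1 p2 q q' : P} (h : q ∈ T {p1, p2}) (h' : q' ∈ T {p1, p2})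
    (heq : hN T p1 p2 q = hN T p1 p2 q') : q = q' :=
  mkInjD_inj (tFns_card_le T p1 p2 p2) ((mem_tFns T).2 h) ((mem_tFns T).2 h') heq

lemma alloc_nonempty (p1 p2 q : P) : (allocF.{u} T p1 p2 q).Nonempty := by
  rw [← Finset.card_pos, card_allocF]
  have := card_Eb.{u} T p1
  omega

lemma Eb_disj : ∀ e : ZFSet.{u}, ∀ q q' : P, q ≠ q' → e ∈ Eb T q → e ∈ Eb T q' → False := by
  intro e
  induction e using ZFSet.inductionOn with
  | _ e IH =>
  intro q q' hne hq hq'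
  by_cases h1 : exPP T q <;> by_cases h2 : exPP T q'
  · rw [Eb_eq_alloc T h1] at hq
    rw [Eb_eq_alloc T h2] at hq'
    obtain ⟨u, hu, he⟩ := (mem_allocF T).1 hq
    obtain ⟨u', hu', he'⟩ := (mem_allocF T).1 hq'
    have hs := par_spec T h1
    have hs' := par_spec T h2
    have hu1 : u ∈ Eb T (par T q).1 := (Finset.mem_sdiff.1 hu).1
    have hu1' : u' ∈ Eb T (par T q').1 := (Finset.mem_sdiff.1 hu').1
    have hh : hN T (par T q).1 (par T q).2 q ∈ Eb T (par T q).2 :=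
      Rpart_subset _ _ (hN_mem T hs.2.1)
    have hh' : hN T (par T q').1 (par T q').2 q' ∈ Eb T (par T q').2 :=
      Rpart_subset _ _ (hN_mem T hs'.2.1)
    have hmemu : u ∈ e := by rw [he]; exact zmem_pair.2 (Or.inl rfl)
    have hmemh : hN T (par T q).1 (par T q).2 q ∈ e := by
      rw [he]; exact zmem_pair.2 (Or.inr rfl)
    rcases zpair_eq (he.symm.trans he') with ⟨e1, e2⟩ | ⟨e1, e2⟩
    · have ha1 : (par T q).1 = (par T q').1 := by
        by_contra hab
        exact IH u hmemu (par T q).1 (par T q').1 hab hu1 (by rw [e1]; exact hu1')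
      have ha2 : (par T q).2 = (par T q').2 := by
        by_contra hab
        exact IH _ hmemh (par T q).2 (par T q').2 hab hh (by rw [e2]; exact hh')
      have hqT : q ∈ T {(par T q).1, (par T q).2} := hs.2.1
      have hqT' : q' ∈ T {(par T q).1, (par T q).2} := by
        rw [ha1, ha2]; exact hs'.2.1
      have : hN T (par T q).1 (par T q).2 q = hN T (par T q).1 (par T q).2 q' := by
        rw [e2, ha1, ha2]
      exact hne (hN_inj T hqT hqT' this)
    · have ha1 : (par T q).1 = (par T q').2 := by
        by_contra hab
        exact IH u hmemu (par T q).1 (par T q').2 hab hu1 (by rw [e1]; exact hh')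
      have ha2 : (par T q).2 = (par T q').1 := by
        by_contra hab
        exact IH _ hmemh (par T q).2 (par T q').1 hab hh (by rw [e2]; exact hu1')
      have hcontra : u ∈ Rpart (Fintype.card P) (Eb T (par T q).1) := by
        rw [e1, ha1]
        exact hN_mem T hs'.2.1
      exact (Finset.mem_sdiff.1 hu).2 hcontra
  · obtain ⟨j, hj, hje⟩ := (mem_atomsF T).1 ((Eb_eq_src T h2) ▸ hq')
    rw [Eb_eq_alloc T h1] at hq
    obtain ⟨u, hu, he⟩ := (mem_allocF T).1 hq
    exact atomZ_ne_pair _ _ _ (hje.symm.trans he)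
  · obtain ⟨j, hj, hje⟩ := (mem_atomsF T).1 ((Eb_eq_src T h1) ▸ hq)
    rw [Eb_eq_alloc T h2] at hq'
    obtain ⟨u, hu, he⟩ := (mem_allocF T).1 hq'
    exact atomZ_ne_pair _ _ _ (hje.symm.trans he)
  · obtain ⟨i, hi, hie⟩ := (mem_atomsF T).1 ((Eb_eq_src T h1) ▸ hq)
    obtain ⟨j, hj, hje⟩ := (mem_atomsF T).1 ((Eb_eq_src T h2) ▸ hq')
    have := atomZ_inj (hie.symm.trans hje)
    exact hne (idx_inj (Nat.pair_eq_pair.1 this).1)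

/-- Topological order hypothesis. -/
def OrdH : Prop :=
  ∀ p1 p2 : P, (tFns T p1 p2).Nonempty → p1 < maxT T p1 p2 ∧ p2 < maxT T p1 p2

noncomputable def excl (p1 p2 q : P) : Finset ZFSet.{u} :=
  (tFns T p1 p2).biUnion fun q' => if q' = q then ∅ else allocF T p1 p2 q'

lemma mem_excl {w : ZFSet.{u}} {p1 p2 q : P} :
    w ∈ excl T p1 p2 q ↔ ∃ q', q' ∈ T {p1, p2} ∧ q' ≠ q ∧ w ∈ allocF T p1 p2 q' := by
  simp only [excl, Finset.mem_biUnion]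
  constructor
  · rintro ⟨q', hq', hw⟩
    by_cases h : q' = q
    · rw [if_pos h] at hw; exact absurd hw (Finset.notMem_empty w)
    · rw [if_neg h] at hw; exact ⟨q', (mem_tFns T).1 hq', h, hw⟩
  · rintro ⟨q', h1, h2, hw⟩
    exact ⟨q', (mem_tFns T).2 h1, by rw [if_neg h2]; exact hw⟩

noncomputable def blkF (f : P → Finset ZFSet.{u}) (q : P) : Finset ZFSet.{u} :=
  if Src T q then atomsF T q
  else Finset.univ.biUnion fun pp : P × P =>
    if pp.1 ≤ pp.2 ∧ q ∈ T {pp.1, pp.2} then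
      if q = maxT T pp.1 pp.2 then pairsF (f pp.1) (f pp.2) \ excl T pp.1 pp.2 q
      else allocF T pp.1 pp.2 q
    else ∅

noncomputable def blk (hOrd : OrdH T) : P → Finset ZFSet.{u} :=
  (Finite.wellFounded_of_trans_of_irrefl ((· < ·) : P → P → Prop)).fix fun q rec =>
    blkF T (fun y => if hy : y < q then rec y hy else ∅) q

lemma blkF_congr {f g : P → Finset ZFSet.{u}} {q : P}
    (h : ∀ pp : P × P, pp.1 ≤ pp.2 ∧ q ∈ T {pp.1, pp.2} → q = maxT T pp.1 pp.2 →
      f pp.1 = g pp.1 ∧ f pp.2 = g pp.2) :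
    blkF T f q = blkF T g q := by
  unfold blkF
  by_cases hS : Src T q
  · rw [if_pos hS, if_pos hS]
  · rw [if_neg hS, if_neg hS]
    apply Finset.biUnion_congr rfl
    intro pp _
    by_cases h1 : pp.1 ≤ pp.2 ∧ q ∈ T {pp.1, pp.2}
    · rw [if_pos h1, if_pos h1]
      by_cases h2 : q = maxT T pp.1 pp.2
      · rw [if_pos h2, if_pos h2, (h pp h1 h2).1, (h pp h1 h2).2]
      · rw [if_neg h2, if_neg h2]
    · rw [if_neg h1, if_neg h1]

lemma blk_fix (hOrd : OrdH T) (q : P) :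
    blk T hOrd q = blkF T (fun y => if _ : y < q then blk T hOrd y else ∅) q :=
  WellFounded.fix_eq _ _ q

lemma blk_unfold (hOrd : OrdH T) (q : P) :
    blk T hOrd q = blkF T (blk T hOrd) q := by
  rw [blk_fix T hOrd q]
  apply blkF_congr
  intro pp h1 h2
  have hne : (tFns T pp.1 pp.2).Nonempty := ⟨q, (mem_tFns T).2 h1.2⟩
  have hlt := hOrd pp.1 pp.2 hne
  have l1 : pp.1 < q := lt_of_lt_of_le hlt.1 (le_of_eq h2.symm)
  have l2 : pp.2 < q := lt_of_lt_of_le hlt.2 (le_of_eq h2.symm)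
  rw [dif_pos l1, dif_pos l2]
  exact ⟨rfl, rfl⟩

lemma blk_src (hOrd : OrdH T) {q : P} (hS : Src T q) : blk T hOrd q = atomsF T q := by
  rw [blk_unfold, blkF, if_pos hS]

noncomputable def shareF (hOrd : OrdH T) (p1 p2 q : P) : Finset ZFSet.{u} :=
  if q = maxT T p1 p2 then
    pairsF (blk T hOrd p1) (blk T hOrd p2) \ excl T p1 p2 q
  else allocF T p1 p2 q

lemma mem_blk {hOrd : OrdH T} {q : P} (hS : ¬ Src T q) {w : ZFSet.{u}} :
    w ∈ blk T hOrd q ↔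
      ∃ pp : P × P, (pp.1 ≤ pp.2 ∧ q ∈ T {pp.1, pp.2}) ∧ w ∈ shareF T hOrd pp.1 pp.2 q := by
  rw [blk_unfold, blkF, if_neg hS]
  simp only [Finset.mem_biUnion, Finset.mem_univ, true_and]
  constructor
  · rintro ⟨pp, hin⟩
    by_cases h1 : pp.1 ≤ pp.2 ∧ q ∈ T {pp.1, pp.2}
    · rw [if_pos h1] at hin
      exact ⟨pp, h1, by rw [shareF]; exact hin⟩
    · rw [if_neg h1] at hin
      exact absurd hin (Finset.notMem_empty w)
  · rintro ⟨pp, h1, hin⟩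
    refine ⟨pp, ?_⟩
    rw [if_pos h1]
    rw [shareF] at hin
    exact hin

lemma alloc_disj {p1 p2 q q' : P} (hne : q ≠ q') (h : q ∈ T {p1, p2}) (h' : q' ∈ T {p1, p2})
    {w : ZFSet.{u}} (hw : w ∈ allocF T p1 p2 q) (hw' : w ∈ allocF T p1 p2 q') : False := by
  obtain ⟨u, hu, rfl⟩ := (mem_allocF T).1 hw
  obtain ⟨u', hu', he⟩ := (mem_allocF T).1 hw'
  rcases zpair_eq he with ⟨e1, e2⟩ | ⟨e1, e2⟩
  · exact hne (hN_inj T h h' e2)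
  · by_cases hpp : p1 = p2
    · subst hpp
      exact (Finset.mem_sdiff.1 hu).2 (by rw [e1]; exact hN_mem T h')
    · have hu2 : u ∈ Eb T p2 := by rw [e1]; exact Rpart_subset _ _ (hN_mem T h')
      exact Eb_disj T u p1 p2 hpp (Finset.mem_sdiff.1 hu).1 hu2

lemma Eb_sub_blk (hacc : ∀ p : P, Accessible T p) (hOrd : OrdH T) :
    ∀ q : P, Eb T q ⊆ blk T hOrd q := by
  intro q
  refine (Finite.wellFounded_of_trans_of_irrefl ((· < ·) : P → P → Prop)).induction
    (C := fun q => Eb T q ⊆ blk T hOrd q) q ?_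
  intro q IH
  by_cases hS : Src T q
  · have hnp : ¬ exPP T q := fun hp => not_src_of_exPP T hp hS
    rw [Eb_eq_src T hnp, blk_src T hOrd hS]
  · have hPP : exPP T q := exPP_of T (acc_accN T (hacc q)) hS
    have hs := par_spec T hPP
    rw [Eb_eq_alloc T hPP]
    intro w hw
    rw [mem_blk T hS]
    refine ⟨par T q, ⟨hs.1, hs.2.1⟩, ?_⟩
    rw [shareF]
    by_cases hm : q = maxT T (par T q).1 (par T q).2
    · rw [if_pos hm]
      refine Finset.mem_sdiff.2 ⟨?_, ?_⟩
      · obtain ⟨u, hu, rfl⟩ := (mem_allocF T).1 hw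
        have hlt := hOrd (par T q).1 (par T q).2 ⟨q, (mem_tFns T).2 hs.2.1⟩
        have l1 : (par T q).1 < q := lt_of_lt_of_le hlt.1 (le_of_eq hm.symm)
        have l2 : (par T q).2 < q := lt_of_lt_of_le hlt.2 (le_of_eq hm.symm)
        exact mem_pairsF.2 ⟨u, IH _ l1 (Finset.mem_sdiff.1 hu).1, _,
          IH _ l2 (Rpart_subset _ _ (hN_mem T hs.2.1)), rfl⟩
      · intro hex
        obtain ⟨q', h1, h2, h3⟩ := (mem_excl T).1 hex
        exact alloc_disj T h2 h1 hs.2.1 h3 hw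
    · rw [if_neg hm]; exact hw

lemma share_sub_pairs (hacc : ∀ p : P, Accessible T p) (hOrd : OrdH T) {p1 p2 q : P}
    (h : q ∈ T {p1, p2}) :
    shareF T hOrd p1 p2 q ⊆ pairsF (blk T hOrd p1) (blk T hOrd p2) := by
  rw [shareF]
  by_cases hm : q = maxT T p1 p2
  · rw [if_pos hm]; exact Finset.sdiff_subset
  · rw [if_neg hm]
    intro w hw
    obtain ⟨u, hu, rfl⟩ := (mem_allocF T).1 hw
    exact mem_pairsF.2 ⟨u, Eb_sub_blk T hacc hOrd p1 (Finset.mem_sdiff.1 hu).1, _,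
      Eb_sub_blk T hacc hOrd p2 (Rpart_subset _ _ (hN_mem T h)), rfl⟩

lemma blk_disj (hacc : ∀ p : P, Accessible T p) (hOrd : OrdH T) :
    ∀ e : ZFSet.{u}, ∀ q q' : P, q ≠ q' → e ∈ blk T hOrd q → e ∈ blk T hOrd q' → False := by
  intro e
  induction e using ZFSet.inductionOn with
  | _ e IH =>
  intro q q' hne hq hq'
  by_cases hS : Src T q <;> by_cases hS' : Src T q'
  · rw [blk_src T hOrd hS] at hq
    rw [blk_src T hOrd hS'] at hq'
    obtain ⟨i, hi, hie⟩ := (mem_atomsF T).1 hq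
    obtain ⟨j, hj, hje⟩ := (mem_atomsF T).1 hq'
    exact hne (idx_inj (Nat.pair_eq_pair.1 (atomZ_inj (hie.symm.trans hje))).1)
  · rw [blk_src T hOrd hS] at hq
    obtain ⟨i, hi, hie⟩ := (mem_atomsF T).1 hq
    obtain ⟨b, hb, hshb⟩ := (mem_blk T hS').1 hq'
    obtain ⟨u, hu, v, hv, hevv⟩ := mem_pairsF.1 (share_sub_pairs T hacc hOrd hb.2 hshb)
    exact atomZ_ne_pair _ _ _ (hie.symm.trans hevv)
  · rw [blk_src T hOrd hS'] at hq'
    obtain ⟨i, hi, hie⟩ := (mem_atomsF T).1 hq'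
    obtain ⟨a, ha, hsha⟩ := (mem_blk T hS).1 hq
    obtain ⟨u, hu, v, hv, hevv⟩ := mem_pairsF.1 (share_sub_pairs T hacc hOrd ha.2 hsha)
    exact atomZ_ne_pair _ _ _ (hie.symm.trans hevv)
  · obtain ⟨a, ha, hsha⟩ := (mem_blk T hS).1 hq
    obtain ⟨b, hb, hshb⟩ := (mem_blk T hS').1 hq'
    obtain ⟨u, hu, v, hv, he⟩ := mem_pairsF.1 (share_sub_pairs T hacc hOrd ha.2 hsha)
    obtain ⟨u', hu', v', hv', he'⟩ := mem_pairsF.1 (share_sub_pairs T hacc hOrd hb.2 hshb)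
    have hmu : u ∈ e := by rw [he]; exact zmem_pair.2 (Or.inl rfl)
    have hmv : v ∈ e := by rw [he]; exact zmem_pair.2 (Or.inr rfl)
    have hnode : a.1 = b.1 ∧ a.2 = b.2 := by
      rcases zpair_eq (he.symm.trans he') with ⟨e1, e2⟩ | ⟨e1, e2⟩
      · constructor
        · by_contra hab
          exact IH u hmu a.1 b.1 hab hu (by rw [e1]; exact hu')
        · by_contra hab
          exact IH v hmv a.2 b.2 hab hv (by rw [e2]; exact hv')
      · have f1 : a.1 = b.2 := by
          by_contra hab
          exact IH u hmu a.1 b.2 hab hu (by rw [e1]; exact hv')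
        have f2 : a.2 = b.1 := by
          by_contra hab
          exact IH v hmv a.2 b.1 hab hv (by rw [e2]; exact hu')
        have hba : b.2 ≤ b.1 := by rw [← f1, ← f2]; exact ha.1
        have hbb : b.1 = b.2 := le_antisymm hb.1 hba
        exact ⟨f1.trans hbb.symm, f2.trans hbb⟩
    have hq'T : q' ∈ T {a.1, a.2} := by rw [hnode.1, hnode.2]; exact hb.2
    have hshb' : e ∈ shareF T hOrd a.1 a.2 q' := by rw [hnode.1, hnode.2]; exact hshb
    rw [shareF] at hsha hshb'
    by_cases hma : q = maxT T a.1 a.2 <;> by_cases hmb : q' = maxT T a.1 a.2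
    · exact hne (hma.trans hmb.symm)
    · rw [if_pos hma] at hsha
      rw [if_neg hmb] at hshb'
      exact (Finset.mem_sdiff.1 hsha).2
        ((mem_excl T).2 ⟨q', hq'T, fun hqq => hne hqq.symm, hshb'⟩)
    · rw [if_neg hma] at hsha
      rw [if_pos hmb] at hshb'
      refine (Finset.mem_sdiff.1 hshb').2 ((mem_excl T).2 ⟨q, ha.2, hne, hsha⟩)
    · rw [if_neg hma] at hsha
      rw [if_neg hmb] at hshb'
      exact alloc_disj T hne ha.2 hq'T hsha hshb'

lemma blk_nonempty (hacc : ∀ p : P, Accessible T p) (hOrd : OrdH T) (q : P) :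
    (blk.{u} T hOrd q).Nonempty := by
  by_cases hS : Src T q
  · rw [blk_src T hOrd hS, ← Finset.card_pos, card_atomsF]
    show 0 < Fintype.card P * Rmax T + Fintype.card P + 1
    omega
  · have h1 : 0 < (Eb T q).card := by
      have := card_Eb.{u} T q
      omega
    obtain ⟨w, hw⟩ := Finset.card_pos.1 h1
    exact ⟨w, Eb_sub_blk T hacc hOrd q hw⟩

lemma cover (hacc : ∀ p : P, Accessible T p) (hOrd : OrdH T) {p1 p2 : P} (hle : p1 ≤ p2)
    (hne : (T {p1, p2}).Nonempty) {w : ZFSet.{u}}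
    (hw : w ∈ pairsF (blk T hOrd p1) (blk T hOrd p2)) :
    ∃ q, q ∈ T {p1, p2} ∧ w ∈ blk T hOrd q := by
  have hFne : (tFns T p1 p2).Nonempty := ⟨hne.choose, (mem_tFns T).2 hne.choose_spec⟩
  have hmT : maxT T p1 p2 ∈ T {p1, p2} := maxT_mem T hFne
  by_cases hex : w ∈ excl T p1 p2 (maxT T p1 p2)
  · obtain ⟨q', h1, h2, h3⟩ := (mem_excl T).1 hex
    refine ⟨q', h1, ?_⟩
    rw [mem_blk T (not_src_of_mem T h1)]
    refine ⟨(p1, p2), ⟨hle, h1⟩, ?_⟩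
    rw [shareF, if_neg h2]
    exact h3
  · refine ⟨maxT T p1 p2, hmT, ?_⟩
    rw [mem_blk T (not_src_of_mem T hmT)]
    refine ⟨(p1, p2), ⟨hle, hmT⟩, ?_⟩
    rw [shareF, if_pos rfl]
    exact Finset.mem_sdiff.2 ⟨hw, hex⟩

lemma blk_HF (hacc : ∀ p : P, Accessible T p) (hOrd : OrdH T) :
    ∀ e : ZFSet.{u}, ∀ q : P, e ∈ blk T hOrd q → IsHF e := by
  intro e
  induction e using ZFSet.inductionOn with
  | _ e IH =>
  intro q hq
  by_cases hS : Src T q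
  · rw [blk_src T hOrd hS] at hq
    obtain ⟨i, hi, rfl⟩ := (mem_atomsF T).1 hq
    exact isHF_atomZ _
  · obtain ⟨a, ha, hsha⟩ := (mem_blk T hS).1 hq
    obtain ⟨u, hu, v, hv, he⟩ := mem_pairsF.1 (share_sub_pairs T hacc hOrd ha.2 hsha)
    subst he
    exact isHF_pair (IH u (zmem_pair.2 (Or.inl rfl)) a.1 hu) (IH v (zmem_pair.2 (Or.inr rfl)) a.2 hv)

end Graph


noncomputable def mkLin {P : Type} (r : P → P → Prop)
    (irr : ∀ a, ¬ r a a) (tr : ∀ a b c, r a b → r b c → r a c)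
    (tot : ∀ a b, a ≠ b → r a b ∨ r b a) : LinearOrder P where
  le a b := r a b ∨ a = b
  lt := r
  le_refl a := Or.inr rfl
  le_trans a b c hab hbc := by
    rcases hab with hab | rfl
    · rcases hbc with hbc | rfl
      · exact Or.inl (tr _ _ _ hab hbc)
      · exact Or.inl hab
    · exact hbc
  le_antisymm a b hab hba := by
    rcases hab with hab | rfl
    · rcases hba with hba | rfl
      · exact absurd (tr _ _ _ hab hba) (irr a)
      · rfl
    · rfl
  le_total a b := by
    by_cases h : a = b
    · exact Or.inl (Or.inr h)
    · rcases tot a b h with h' | h'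
      · exact Or.inl (Or.inl h')
      · exact Or.inr (Or.inl h')
  lt_iff_le_not_ge a b := by
    constructor
    · intro h
      refine ⟨Or.inl h, ?_⟩
      rintro (h' | rfl)
      · exact irr _ (tr _ _ _ h h')
      · exact irr _ h
    · rintro ⟨h1 | rfl, h2⟩
      · exact h1
      · exact absurd (Or.inr rfl) h2
  toDecidableLE := fun a b => Classical.dec _


/-- a BST⊗-conjunction fulfilled by an accessible ⊗-graph admitting a
topological ⊗-order has a hereditarily finite model. -/
theorem stmt18 {V P : Type} [Finite P] (Φ : List (Lit V)) (T : Set P → Set P)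
    (hT : ∀ A, A ∉ NodesOf P → T A = ∅) (hacc : ∀ p : P, Accessible T p)
    (r : P → P → Prop) (hr : IsTopOOrder T r)
    (F : V → Set P) (hF : Fulfills T F Φ) :
    ∃ M : V → ZFSet, (∀ l ∈ Φ, Lit.Sat M l) ∧ ∀ v, IsHF (M v) := by
  classical
  letI : Fintype P := Fintype.ofFinite P
  obtain ⟨irr, tr, tot, hmax⟩ := hr
  letI : LinearOrder P := mkLin r irr tr tot
  have hOrd : OrdH T := by
    intro p1 p2 hne
    have hAne : (T {p1, p2}).Nonempty := ⟨hne.choose, (mem_tFns T).1 hne.choose_spec⟩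
    obtain ⟨m, m', hm, hm', hmm'⟩ := hmax {p1, p2} (pair_mem_nodes p1 p2) hAne
    have hmax' : maxT T p1 p2 = m' := by
      have h1 : m' ≤ maxT T p1 p2 := le_maxT T hm'.1
      rcases hm'.2 (maxT T p1 p2) (maxT_mem T hne) with h2 | h2
      · exact h2
      · exact absurd h1 (not_le.2 h2)
    constructor
    · rw [hmax']
      rcases hm.2 p1 (Set.mem_insert _ _) with h2 | h2
      · rw [h2]; exact hmm'
      · exact lt_trans h2 hmm'
    · rw [hmax']
      rcases hm.2 p2 (Set.mem_insert_iff.2 (Or.inr rfl)) with h2 | h2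
      · rw [h2]; exact hmm'
      · exact lt_trans h2 hmm'
  have memM : ∀ (v : V) (w : ZFSet),
      w ∈ toZF (((F v).toFinite.toFinset).biUnion (blk T hOrd)) ↔
        ∃ p ∈ F v, w ∈ blk T hOrd p := by
    intro v w
    rw [mem_toZF]
    simp only [Finset.mem_biUnion, Set.Finite.mem_toFinset]
  refine ⟨fun v => toZF (((F v).toFinite.toFinset).biUnion (blk T hOrd)), ?_, ?_⟩
  · intro l hl
    have hGF := hF l hl
    cases l with
    | eqUnion x y z =>
      have hxyz : F x = F y ∪ F z := hGF
      show toZF _ = toZF _ ∪ toZF _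
      apply ZFSet.ext
      intro w
      rw [ZFSet.mem_union, memM, memM, memM]
      constructor
      · rintro ⟨p, hp, hw⟩
        rw [hxyz] at hp
        rcases hp with hp | hp
        · exact Or.inl ⟨p, hp, hw⟩
        · exact Or.inr ⟨p, hp, hw⟩
      · rintro (⟨p, hp, hw⟩ | ⟨p, hp, hw⟩)
        · exact ⟨p, by rw [hxyz]; exact Or.inl hp, hw⟩
        · exact ⟨p, by rw [hxyz]; exact Or.inr hp, hw⟩
    | eqDiff x y z =>
      have hxyz : F x = F y \ F z := hGF
      show toZF _ = toZF _ \ toZF _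
      apply ZFSet.ext
      intro w
      rw [ZFSet.mem_sdiff, memM, memM, memM]
      constructor
      · rintro ⟨p, hp, hw⟩
        rw [hxyz] at hp
        refine ⟨⟨p, hp.1, hw⟩, ?_⟩
        rintro ⟨p', hp', hw'⟩
        by_cases hpe : p = p'
        · exact hp.2 (hpe ▸ hp')
        · exact blk_disj T hacc hOrd w p p' hpe hw hw'
      · rintro ⟨⟨p, hp, hw⟩, hnz⟩
        refine ⟨p, ?_, hw⟩
        rw [hxyz]
        exact ⟨hp, fun hpz => hnz ⟨p, hpz, hw⟩⟩
    | ne x y =>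
      have hxy : F x ≠ F y := hGF
      have hex : ∃ p, (p ∈ F x ∧ p ∉ F y) ∨ (p ∈ F y ∧ p ∉ F x) := by
        by_contra h
        push_neg at h
        apply hxy
        ext p
        have := h p
        tauto
      obtain ⟨p, hp⟩ := hex
      obtain ⟨w, hw⟩ := blk_nonempty T hacc hOrd p
      show toZF _ ≠ toZF _
      intro heq
      rcases hp with ⟨hpx, hpy⟩ | ⟨hpy, hpx⟩
      · have hwx : w ∈ toZF (((F x).toFinite.toFinset).biUnion (blk T hOrd)) :=
          (memM x w).2 ⟨p, hpx, hw⟩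
        rw [heq] at hwx
        obtain ⟨p', hp', hw'⟩ := (memM y w).1 hwx
        by_cases hpe : p = p'
        · exact hpy (hpe ▸ hp')
        · exact blk_disj T hacc hOrd w p p' hpe hw hw'
      · have hwy : w ∈ toZF (((F y).toFinite.toFinset).biUnion (blk T hOrd)) :=
          (memM y w).2 ⟨p, hpy, hw⟩
        rw [← heq] at hwy
        obtain ⟨p', hp', hw'⟩ := (memM x w).1 hwy
        by_cases hpe : p = p'
        · exact hpx (hpe ▸ hp')
        · exact blk_disj T hacc hOrd w p p' hpe hw hw'
    | eqUprod x y z =>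
      obtain ⟨c1, c2, c3⟩ := hGF
      show (toZF _).toSet = uprod (toZF _) (toZF _)
      ext w
      rw [ZFSet.mem_toSet]
      simp only [uprod, Set.mem_setOf_eq]
      constructor
      · intro hw
        obtain ⟨q, hqx, hwq⟩ := (memM x w).1 hw
        have hq2 := c2 hqx
        rw [Set.mem_iUnion₂] at hq2
        obtain ⟨A0, hA0, hqA0⟩ := hq2
        obtain ⟨υ0, hυ0, ζ0, hζ0, rfl⟩ := hA0
        have hnS : ¬ Src T q := not_src_of_mem T hqA0
        obtain ⟨a, ha, hsha⟩ := (mem_blk T hnS).1 hwq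
        obtain ⟨u, hu, v, hv, rfl⟩ := mem_pairsF.1 (share_sub_pairs T hacc hOrd ha.2 hsha)
        have hnode : ({a.1, a.2} : Set P) ∈ setUprod (F y) (F z) := by
          by_contra hno
          have hqin : q ∈ (⋃ A ∈ NodesOf P \ setUprod (F y) (F z), T A) ∩ F x := by
            refine ⟨?_, hqx⟩
            rw [Set.mem_iUnion₂]
            exact ⟨{a.1, a.2}, ⟨pair_mem_nodes a.1 a.2, hno⟩, ha.2⟩
          rw [c3] at hqin
          exact hqin
        obtain ⟨υ, hυ, ζ, hζ, hAeq⟩ := hnode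
        rcases Set.pair_eq_pair_iff.1 hAeq with ⟨g1, g2⟩ | ⟨g1, g2⟩
        · exact ⟨u, (memM y u).2 ⟨a.1, by rw [g1]; exact hυ, hu⟩,
            v, (memM z v).2 ⟨a.2, by rw [g2]; exact hζ, hv⟩, rfl⟩
        · exact ⟨v, (memM y v).2 ⟨a.2, by rw [g2]; exact hυ, hv⟩,
            u, (memM z u).2 ⟨a.1, by rw [g1]; exact hζ, hu⟩, zpair_comm u v⟩
      · rintro ⟨u, hu, v, hv, rfl⟩
        obtain ⟨υ, hυ, hub⟩ := (memM y u).1 hu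
        obtain ⟨ζ, hζ, hvb⟩ := (memM z v).1 hv
        have hc1 := c1 υ hυ ζ hζ
        rcases le_total υ ζ with hle | hle
        · have hw' : ({u, v} : ZFSet) ∈ pairsF (blk T hOrd υ) (blk T hOrd ζ) :=
            mem_pairsF.2 ⟨u, hub, v, hvb, rfl⟩
          obtain ⟨q, hq, hwq⟩ := cover T hacc hOrd hle hc1.1 hw'
          exact (memM x _).2 ⟨q, hc1.2 hq, hwq⟩
        · have hT' : (T {ζ, υ}).Nonempty := by rw [Set.pair_comm]; exact hc1.1
          have hw' : ({u, v} : ZFSet) ∈ pairsF (blk T hOrd ζ) (blk T hOrd υ) :=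
            mem_pairsF.2 ⟨v, hvb, u, hub, zpair_comm u v⟩
          obtain ⟨q, hq, hwq⟩ := cover T hacc hOrd hle hT' hw'
          have hq2 : q ∈ T {υ, ζ} := by rwa [Set.pair_comm υ ζ]
          exact (memM x _).2 ⟨q, hc1.2 hq2, hwq⟩
  · intro v
    refine IsHF.mk _ ?_ ?_
    · rw [toZF_toSet]
      exact Finset.finite_toSet _
    · intro w hw
      obtain ⟨p, _, hwp⟩ := (memM v w).1 hw
      exact blk_HF T hacc hOrd w p hwp


end BSTO
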